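/- Let F be an automorphism of P(ω)/Fin, let A ⊆ ℕ be infinite, let A' be a representative of F([A]), and let h be a bijection between a cofinite subset of A and a cofinite subset of A'. If the restriction of F to P(A)/Fin is not induced by h — that is, if it is not the case that F([X]) = [h[X ∩ dom(h)]] for every X ⊆ A — then there exists an infinite B ⊆ A such that F(B) ∩ h[B ∩ dom(h)] is finite, where F(B) denotes any representative of F([B]). -/

import Mathlib

open Set

/-- The first uncountable ordinal `ω₁`. -/
noncomputable def omega1 : Ordinal := (Cardinal.aleph 1).ord

/-- `A =* B` : the symmetric difference `(A \ B) ∪ (B \ A)` is finite. -/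
def EqStar (A B : Set ℕ) : Prop := ((A \ B) ∪ (B \ A)).Finite

/-- `A ⊆* B` : `A \ B` is finite. -/
def SubStar (A B : Set ℕ) : Prop := (A \ B).Finite

/-- An automorphism of the Boolean algebra `P(ω)/Fin`, represented by a lifting
`Φ : Set ℕ → Set ℕ` acting on representatives: `Φ` is well defined, injective
and surjective modulo finite sets, and preserves the Boolean operations modulo
finite sets. -/
structure PωFinAuto where
  /-- the action on representatives -/
  Φ : Set ℕ → Set ℕ
  /-- well-definedness on `=*`-classes -/
  congr : ∀ A B : Set ℕ, EqStar A B → EqStar (Φ A) (Φ B)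
  /-- injectivity on `=*`-classes -/
  inj : ∀ A B : Set ℕ, EqStar (Φ A) (Φ B) → EqStar A B
  /-- surjectivity on `=*`-classes -/
  surj : ∀ B : Set ℕ, ∃ A : Set ℕ, EqStar (Φ A) B
  /-- preservation of unions -/
  map_union : ∀ A B : Set ℕ, EqStar (Φ (A ∪ B)) (Φ A ∪ Φ B)
  /-- preservation of complements -/
  map_compl : ∀ A : Set ℕ, EqStar (Φ Aᶜ) (Φ A)ᶜ

/-- A map on representatives induces a *trivial* automorphism of `P(ω)/Fin` if
there is an almost permutation `h` of `ℕ` (an injection on a cofinite set `dom`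
whose image is cofinite) with `Φ A =* h[A ∩ dom]` for all `A`. -/
def IsTrivial (Φ : Set ℕ → Set ℕ) : Prop :=
  ∃ (h : ℕ → ℕ) (dom : Set ℕ), (domᶜ : Set ℕ).Finite ∧
    ((h '' dom)ᶜ : Set ℕ).Finite ∧ Set.InjOn h dom ∧
    ∀ A : Set ℕ, EqStar (Φ A) (h '' (A ∩ dom))

open Filter

/-!
Choose `X ⊆ A` with `F(X) ≠* h[X]`. If `F(X) \ h[X]` is infinite, put `C = X` and let `D` be
that set; otherwise `D = h[X] \ F(X)` is infinite, lies in `A' \ F(X) =* F(A \ X)` and, `h`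
being injective, is disjoint from `h[A \ X]`, and we put `C = A \ X`. In both cases `D` is an
infinite set with `D ⊆* F(C)` and `D ∩ h[C]` finite. Since `F` is onto, `D =* F(B)` for some
`B ⊆ C` (namely `B = W ∩ C` where `F(W) =* D`), and then `F(B) ∩ h[B] ⊆ (F(B) \ D) ∪ (D ∩ h[C])`
is finite.
-/

lemma eqStar_iff_eventuallyEq {A B : Set ℕ} : EqStar A B ↔ A =ᶠ[cofinite] B := by
  rw [eventuallyEq_set, eventually_cofinite, EqStar]
  congr! 1
  ext x
  simp only [mem_union, Set.mem_sdiff, mem_ofPred_eq]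
  tauto

lemma eqStar_empty_iff {A : Set ℕ} : EqStar A ∅ ↔ A.Finite := by
  simp [EqStar]

namespace EqStar

variable {A B C D : Set ℕ}

lemma refl (A : Set ℕ) : EqStar A A :=
  eqStar_iff_eventuallyEq.2 EventuallyEq.rfl

lemma symm (h : EqStar A B) : EqStar B A :=
  eqStar_iff_eventuallyEq.2 (eqStar_iff_eventuallyEq.1 h).symm

lemma trans (h : EqStar A B) (h' : EqStar B C) : EqStar A C :=
  eqStar_iff_eventuallyEq.2 ((eqStar_iff_eventuallyEq.1 h).trans (eqStar_iff_eventuallyEq.1 h'))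

lemma compl (h : EqStar A B) : EqStar Aᶜ Bᶜ :=
  eqStar_iff_eventuallyEq.2 (eqStar_iff_eventuallyEq.1 h).compl

lemma union (h : EqStar A B) (h' : EqStar C D) : EqStar (A ∪ C) (B ∪ D) :=
  eqStar_iff_eventuallyEq.2 ((eqStar_iff_eventuallyEq.1 h).union (eqStar_iff_eventuallyEq.1 h'))

lemma inter (h : EqStar A B) (h' : EqStar C D) : EqStar (A ∩ C) (B ∩ D) :=
  eqStar_iff_eventuallyEq.2 ((eqStar_iff_eventuallyEq.1 h).inter (eqStar_iff_eventuallyEq.1 h'))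

lemma sdiff (h : EqStar A B) (h' : EqStar C D) : EqStar (A \ C) (B \ D) :=
  eqStar_iff_eventuallyEq.2 ((eqStar_iff_eventuallyEq.1 h).diff (eqStar_iff_eventuallyEq.1 h'))

lemma finite (h : EqStar A B) (hA : A.Finite) : B.Finite :=
  eqStar_empty_iff.1 (h.symm.trans (eqStar_empty_iff.2 hA))

end EqStar

lemma SubStar.eqStar_inter {A B : Set ℕ} (h : SubStar A B) : EqStar (A ∩ B) A :=
  finite_union.2 ⟨by simp [sdiff_eq_empty.2 inter_subset_left], by rwa [sdiff_self_inter]⟩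

namespace PωFinAuto

variable (F : PωFinAuto)

lemma map_inter (X Y : Set ℕ) : EqStar (F.Φ (X ∩ Y)) (F.Φ X ∩ F.Φ Y) := by
  have h := (F.map_compl (Xᶜ ∪ Yᶜ)).trans
    ((F.map_union Xᶜ Yᶜ).trans ((F.map_compl X).union (F.map_compl Y))).compl
  simpa only [compl_union, compl_compl] using h

lemma map_sdiff (X Y : Set ℕ) : EqStar (F.Φ (X \ Y)) (F.Φ X \ F.Φ Y) :=
  (F.map_inter X Yᶜ).trans ((EqStar.refl _).inter (F.map_compl Y))

lemma map_finite {B : Set ℕ} (hB : B.Finite) : (F.Φ B).Finite := by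
  have hempty : EqStar (F.Φ ∅) ∅ := by simpa using F.map_sdiff ∅ ∅
  exact eqStar_empty_iff.1 ((F.congr B ∅ (eqStar_empty_iff.2 hB)).trans hempty)

lemma exists_subset_map_eqStar {C D : Set ℕ} (hD : SubStar D (F.Φ C)) :
    ∃ B ⊆ C, EqStar (F.Φ B) D := by
  obtain ⟨W, hW⟩ := F.surj D
  exact ⟨W ∩ C, inter_subset_right,
    (F.map_inter W C).trans ((hW.inter (.refl _)).trans hD.eqStar_inter)⟩

lemma exists_infinite_map_inter_image_finite (h : ℕ → ℕ) {dom C D : Set ℕ} (hD : D.Infinite)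
    (hDC : SubStar D (F.Φ C)) (hDh : (D ∩ h '' (C ∩ dom)).Finite) :
    ∃ B ⊆ C, B.Infinite ∧ (F.Φ B ∩ h '' (B ∩ dom)).Finite := by
  obtain ⟨B, hBC, hB⟩ := F.exists_subset_map_eqStar hDC
  refine ⟨B, hBC, fun hfin => hD (hB.finite (F.map_finite hfin)), ?_⟩
  refine ((finite_union.1 hB).1.union hDh).subset fun y ⟨hyB, hyh⟩ => ?_
  by_cases hyD : y ∈ D
  · exact Or.inr ⟨hyD, image_mono (inter_subset_inter_left dom hBC) hyh⟩
  · exact Or.inl ⟨hyB, hyD⟩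

end PωFinAuto

theorem exists_set_where_not_induced_general (F : PωFinAuto) (A : Set ℕ)
    (A' : Set ℕ) (hA' : EqStar (F.Φ A) A')
    (h : ℕ → ℕ) (dom : Set ℕ)
    (hinj : Set.InjOn h dom) (hrange : h '' dom ⊆ A')
    (hnot : ¬ ∀ X : Set ℕ, X ⊆ A → EqStar (F.Φ X) (h '' (X ∩ dom))) :
    ∃ B : Set ℕ, B ⊆ A ∧ B.Infinite ∧ (F.Φ B ∩ h '' (B ∩ dom)).Finite := by
  push Not at hnot
  obtain ⟨X, hXA, hX⟩ := hnot
  rw [EqStar, finite_union, not_and_or] at hX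
  rcases hX with hnew | hmissing
  · obtain ⟨B, hBX, hB⟩ := F.exists_infinite_map_inter_image_finite h (C := X) hnew
      (by simp [SubStar]) (by rw [sdiff_inter_self]; exact finite_empty)
    exact ⟨B, hBX.trans hXA, hB⟩
  · have hcompl : EqStar (F.Φ (A \ X)) (A' \ F.Φ X) :=
      (F.map_sdiff A X).trans (hA'.sdiff (.refl _))
    have hsub : SubStar (h '' (X ∩ dom) \ F.Φ X) (F.Φ (A \ X)) :=
      (finite_union.1 hcompl).2.subset <| sdiff_subset_sdiff_left <|
        sdiff_subset_sdiff_left ((image_mono inter_subset_right).trans hrange)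
    have hdisj : Disjoint (h '' (X ∩ dom)) (h '' ((A \ X) ∩ dom)) :=
      (disjoint_sdiff_right.mono inter_subset_left inter_subset_left).image hinj
        inter_subset_right inter_subset_right
    obtain ⟨B, hBAX, hB⟩ := F.exists_infinite_map_inter_image_finite h hmissing hsub
      (by rw [(hdisj.mono_left sdiff_subset).inter_eq]; exact finite_empty)
    exact ⟨B, hBAX.trans sdiff_subset, hB⟩

/-- if `F` is an automorphism of `P(ω)/Fin`, `A` is infinite,
`A'` represents `F([A])`, and `h` is a bijection between a cofinite subset
`dom` of `A` and a cofinite subset of `A'` which does not induce the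
restriction of `F` to `P(A)/Fin`, then there is an infinite `B ⊆ A` with
`F(B) ∩ h[B]` finite. -/
theorem exists_set_where_not_induced (F : PωFinAuto) (A : Set ℕ)
    (hA : A.Infinite) (A' : Set ℕ) (hA' : EqStar (F.Φ A) A')
    (h : ℕ → ℕ) (dom : Set ℕ) (hdomA : dom ⊆ A) (hdomCof : (A \ dom).Finite)
    (hinj : Set.InjOn h dom) (hrange : h '' dom ⊆ A')
    (hrangeCof : (A' \ h '' dom).Finite)
    (hnot : ¬ ∀ X : Set ℕ, X ⊆ A → EqStar (F.Φ X) (h '' (X ∩ dom))) :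
    ∃ B : Set ℕ, B ⊆ A ∧ B.Infinite ∧ (F.Φ B ∩ h '' (B ∩ dom)).Finite :=
  exists_set_where_not_induced_general F A A' hA' h dom hinj hrange hnot
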